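/- arXiv:1012.1935 — 2 statements merged into one kernel-verified Lean document; each statement's English description precedes it below -/
import Mathlib

section
/- The function u(x,t) = −t⁴/3 − 2tx − 12/(x − t³/3)² satisfies the Boussinesq equation u_tt + u_xxxx + u·u_xx + u_x² = 0 at every point (x,t) with x ≠ t³/3. -/
/-!
Write `s = x - t³/3`. On the open set `s ≠ 0` the derivatives are explicit:
`u_x = -2t + 24/s³`, `u_xx = -72/s⁴`, `u_xxxx = -1440/s⁶` and
`u_tt = -4t² - 48t/s³ - 72t⁴/s⁴`; substituting them, the equation becomes an identity of
rational functions in `s` and `t`. Since `px` and `pt` are pointwise `deriv`s, a formula for a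
derivative can only be differentiated again if it holds on a neighbourhood, so every formula is
proved on the whole open set `s ≠ 0`.
-/

open Real

noncomputable def px (u : ℝ → ℝ → ℝ) (x t : ℝ) : ℝ := deriv (fun y => u y t) x
noncomputable def pt (u : ℝ → ℝ → ℝ) (x t : ℝ) : ℝ := deriv (fun s => u x s) t

open Set Function Filter Topology

theorem HasDerivAt.const_div_pow {𝕜 : Type*} [NontriviallyNormedField 𝕜] {f : 𝕜 → 𝕜} {f' x : 𝕜}
    (hf : HasDerivAt f f' x) (hx : f x ≠ 0) (c : 𝕜) (n : ℕ) :
    HasDerivAt (fun y => c / f y ^ n) (-(n * c * f') / f x ^ (n + 1)) x := by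
  have := ((hf.fun_pow n).fun_inv (pow_ne_zero n hx)).const_mul c
  simp only [← div_eq_mul_inv] at this
  refine this.congr_deriv ?_
  rcases n with _ | n
  · simp
  · rw [Nat.add_sub_cancel]
    field_simp
    ring

theorem hasDerivAt_const_div_sub_pow {𝕜 : Type*} [NontriviallyNormedField 𝕜] {a x : 𝕜}
    (hx : x ≠ a) (c : 𝕜) (n : ℕ) :
    HasDerivAt (fun y => c / (y - a) ^ n) (-(n * c) / (x - a) ^ (n + 1)) x := by
  simpa using ((hasDerivAt_id x).sub_const a).const_div_pow (sub_ne_zero.2 hx) c n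

section SliceDeriv

variable {u v w : ℝ → ℝ → ℝ} {Ω : Set (ℝ × ℝ)}

theorem eqOn_px_of_hasDerivAt (hΩ : IsOpen Ω) (huv : EqOn (uncurry u) (uncurry v) Ω)
    (hv : ∀ p ∈ Ω, HasDerivAt (v · p.2) (w p.1 p.2) p.1) :
    EqOn (uncurry (px u)) (uncurry w) Ω := by
  rintro ⟨x, t⟩ hp
  have hslice : ∀ᶠ y in 𝓝 x, (y, t) ∈ Ω :=
    (Continuous.prodMk_left t).continuousAt.preimage_mem_nhds (hΩ.mem_nhds hp)
  exact (EventuallyEq.deriv_eq (hslice.mono fun y hy => huv hy)).trans (hv _ hp).deriv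

theorem eqOn_pt_of_hasDerivAt (hΩ : IsOpen Ω) (huv : EqOn (uncurry u) (uncurry v) Ω)
    (hv : ∀ p ∈ Ω, HasDerivAt (v p.1 ·) (w p.1 p.2) p.2) :
    EqOn (uncurry (pt u)) (uncurry w) Ω := by
  rintro ⟨x, t⟩ hp
  have hslice : ∀ᶠ s in 𝓝 t, (x, s) ∈ Ω :=
    (Continuous.prodMk_right x).continuousAt.preimage_mem_nhds (hΩ.mem_nhds hp)
  exact (EventuallyEq.deriv_eq (hslice.mono fun s hs => huv hs)).trans (hv _ hp).deriv

end SliceDeriv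

def boussinesqDomain : Set (ℝ × ℝ) := {p | p.1 ≠ p.2 ^ 3 / 3}

theorem isOpen_boussinesqDomain : IsOpen boussinesqDomain :=
  isOpen_ne_fun continuous_fst (by fun_prop)

noncomputable def boussinesqSol (x t : ℝ) : ℝ := -t ^ 4 / 3 - 2 * t * x - 12 / (x - t ^ 3 / 3) ^ 2

theorem hasDerivAt_const_sub_cube_div_three (x t : ℝ) :
    HasDerivAt (fun s : ℝ => x - s ^ 3 / 3) (-t ^ 2) t :=
  (((hasDerivAt_pow 3 t).div_const 3).const_sub x).congr_deriv (by ring)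

theorem hasDerivAt_boussinesqSol_x {x t : ℝ} (h : x ≠ t ^ 3 / 3) :
    HasDerivAt (boussinesqSol · t) (-2 * t + 24 / (x - t ^ 3 / 3) ^ 3) x :=
  ((((hasDerivAt_id x).const_mul (2 * t)).const_sub (-t ^ 4 / 3)).sub
    (hasDerivAt_const_div_sub_pow h 12 2)).congr_deriv (by ring)

theorem hasDerivAt_boussinesqSol_t {x t : ℝ} (h : x ≠ t ^ 3 / 3) :
    HasDerivAt (boussinesqSol x ·)
      (-4 * t ^ 3 / 3 - 2 * x - 24 * t ^ 2 / (x - t ^ 3 / 3) ^ 3) t :=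
  (((hasDerivAt_pow 4 t).neg.div_const 3).sub (((hasDerivAt_id t).const_mul 2).mul_const x)).sub
    ((hasDerivAt_const_sub_cube_div_three x t).const_div_pow (sub_ne_zero.2 h) 12 2)
    |>.congr_deriv (by ring)

theorem eqOn_px_boussinesqSol :
    EqOn (uncurry (px boussinesqSol)) (uncurry fun x t => -2 * t + 24 / (x - t ^ 3 / 3) ^ 3)
      boussinesqDomain :=
  eqOn_px_of_hasDerivAt isOpen_boussinesqDomain (eqOn_refl _ _) fun _ hp =>
    hasDerivAt_boussinesqSol_x hp

theorem eqOn_px_px_boussinesqSol :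
    EqOn (uncurry (px (px boussinesqSol))) (uncurry fun x t => -72 / (x - t ^ 3 / 3) ^ 4)
      boussinesqDomain :=
  eqOn_px_of_hasDerivAt isOpen_boussinesqDomain eqOn_px_boussinesqSol fun _ hp =>
    ((hasDerivAt_const_div_sub_pow hp 24 3).const_add _).congr_deriv (by norm_num)

theorem eqOn_px_of_eqOn_pole {u : ℝ → ℝ → ℝ} {c : ℝ} {n : ℕ}
    (hu : EqOn (uncurry u) (uncurry fun x t => c / (x - t ^ 3 / 3) ^ n) boussinesqDomain) :
    EqOn (uncurry (px u)) (uncurry fun x t => -(n * c) / (x - t ^ 3 / 3) ^ (n + 1))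
      boussinesqDomain :=
  eqOn_px_of_hasDerivAt isOpen_boussinesqDomain hu fun _ hp => hasDerivAt_const_div_sub_pow hp c n

theorem eqOn_pt_boussinesqSol :
    EqOn (uncurry (pt boussinesqSol))
      (uncurry fun x t => -4 * t ^ 3 / 3 - 2 * x - 24 * t ^ 2 / (x - t ^ 3 / 3) ^ 3)
      boussinesqDomain :=
  eqOn_pt_of_hasDerivAt isOpen_boussinesqDomain (eqOn_refl _ _) fun _ hp =>
    hasDerivAt_boussinesqSol_t hp

theorem eqOn_pt_pt_boussinesqSol :
    EqOn (uncurry (pt (pt boussinesqSol)))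
      (uncurry fun x t =>
        -4 * t ^ 2 - 48 * t / (x - t ^ 3 / 3) ^ 3 - 72 * t ^ 4 / (x - t ^ 3 / 3) ^ 4)
      boussinesqDomain := by
  refine eqOn_pt_of_hasDerivAt isOpen_boussinesqDomain eqOn_pt_boussinesqSol ?_
  rintro ⟨x, t⟩ (hp : x ≠ t ^ 3 / 3)
  have hs : x - t ^ 3 / 3 ≠ 0 := sub_ne_zero.2 hp
  refine ((((hasDerivAt_pow 3 t).const_mul (-4)).div_const 3).sub_const (2 * x)).sub
    (((hasDerivAt_pow 2 t).const_mul 24).div ((hasDerivAt_const_sub_cube_div_three x t).fun_pow 3)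
      (pow_ne_zero 3 hs)) |>.congr_deriv ?_
  dsimp only
  norm_num
  generalize x - t ^ 3 / 3 = s at hs ⊢
  field_simp
  ring

theorem boussinesq_sol_weakCS :
    ∀ x t : ℝ, x ≠ t ^ 3 / 3 →
      (let u : ℝ → ℝ → ℝ := fun x t => -t ^ 4 / 3 - 2 * t * x - 12 / (x - t ^ 3 / 3) ^ 2
       pt (pt u) x t + px (px (px (px u))) x t + u x t * px (px u) x t
         + (px u x t) ^ 2 = 0) := by
  intro x t h
  have hp : (x, t) ∈ boussinesqDomain := h
  have utt := eqOn_pt_pt_boussinesqSol hp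
  have ux := eqOn_px_boussinesqSol hp
  have uxx := eqOn_px_px_boussinesqSol hp
  have uxxxx := eqOn_px_of_eqOn_pole (eqOn_px_of_eqOn_pole eqOn_px_px_boussinesqSol) hp
  simp only [uncurry_apply_pair] at utt ux uxx uxxxx
  show pt (pt boussinesqSol) x t + px (px (px (px boussinesqSol))) x t
    + boussinesqSol x t * px (px boussinesqSol) x t + px boussinesqSol x t ^ 2 = 0
  rw [utt, ux, uxx, uxxxx, boussinesqSol]
  obtain ⟨s, hs, rfl⟩ : ∃ s, s ≠ 0 ∧ x = s + t ^ 3 / 3 :=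
    ⟨x - t ^ 3 / 3, sub_ne_zero.2 h, by ring⟩
  simp only [add_sub_cancel_right]
  push_cast
  field_simp
  ring
end

section
/- For any real constants c₁, c₂, the function u(x,t) = −t⁴/3 + c₁t − 2tx + c₂ satisfies simultaneously the Boussinesq equation u_tt + u_xxxx + u·u_xx + u_x² = 0 and the two auxiliary equations −10t − 3u_x − 2t·u_xt − (5/3)t³·u_xx − x·u_xx = 0 and 2 + u_xt + t²·u_xx = 0 at every point of ℝ². -/
open Real

section aux

variable (c₁ c₂ : ℝ)

private lemma hpx : ∀ x t : ℝ,
    px (fun x t => -t ^ 4 / 3 + c₁ * t - 2 * t * x + c₂) x t = -2 * t := by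
  intro x t
  have h : HasDerivAt (fun y : ℝ => -t ^ 4 / 3 + c₁ * t - 2 * t * y + c₂) (-2 * t) x := by
    have := (((hasDerivAt_id x).const_mul (2 * t)).const_sub (-t ^ 4 / 3 + c₁ * t)).add_const c₂
    simpa using this.congr_deriv (by ring)
  exact h.deriv

private lemma hpt : ∀ x t : ℝ,
    pt (fun x t => -t ^ 4 / 3 + c₁ * t - 2 * t * x + c₂) x t
      = -4 * t ^ 3 / 3 + c₁ - 2 * x := by
  intro x t
  have h : HasDerivAt (fun s : ℝ => -s ^ 4 / 3 + c₁ * s - 2 * s * x + c₂)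
      (-4 * t ^ 3 / 3 + c₁ - 2 * x) t := by
    have h1 : HasDerivAt (fun s : ℝ => s ^ 4) (4 * t ^ 3) t := by
      simpa using (hasDerivAt_pow 4 t)
    have := (((((h1.neg.div_const 3)).add ((hasDerivAt_id t).const_mul c₁)).sub
      (((hasDerivAt_id t).const_mul 2).mul_const x)).add_const c₂)
    simpa using this.congr_deriv (show _ = -4 * t ^ 3 / 3 + c₁ - 2 * x by ring)
  exact h.deriv

private lemma hpxx : ∀ x t : ℝ,
    px (px (fun x t => -t ^ 4 / 3 + c₁ * t - 2 * t * x + c₂)) x t = 0 := by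
  intro x t
  have : (fun y => px (fun x t => -t ^ 4 / 3 + c₁ * t - 2 * t * x + c₂) y t)
      = fun _ : ℝ => -2 * t := funext fun y => hpx c₁ c₂ y t
  show deriv _ x = 0
  rw [this]
  simp

private lemma hpxt : ∀ x t : ℝ,
    pt (px (fun x t => -t ^ 4 / 3 + c₁ * t - 2 * t * x + c₂)) x t = -2 := by
  intro x t
  have : (fun s => px (fun x t => -t ^ 4 / 3 + c₁ * t - 2 * t * x + c₂) x s)
      = fun s : ℝ => -2 * s := funext fun s => hpx c₁ c₂ x s
  rw [pt, this]
  simpa using ((hasDerivAt_id t).const_mul (-2 : ℝ)).deriv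

private lemma hpxxx : ∀ x t : ℝ,
    px (px (px (fun x t => -t ^ 4 / 3 + c₁ * t - 2 * t * x + c₂))) x t = 0 := by
  intro x t
  have : (fun y => px (px (fun x t => -t ^ 4 / 3 + c₁ * t - 2 * t * x + c₂)) y t)
      = fun _ : ℝ => (0 : ℝ) := funext fun y => hpxx c₁ c₂ y t
  show deriv _ x = 0
  rw [this]
  simp

private lemma hpxxxx : ∀ x t : ℝ,
    px (px (px (px (fun x t => -t ^ 4 / 3 + c₁ * t - 2 * t * x + c₂)))) x t = 0 := by
  intro x t
  have : (fun y => px (px (px (fun x t => -t ^ 4 / 3 + c₁ * t - 2 * t * x + c₂))) y t)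
      = fun _ : ℝ => (0 : ℝ) := funext fun y => hpxxx c₁ c₂ y t
  show deriv _ x = 0
  rw [this]
  simp

private lemma hptt : ∀ x t : ℝ,
    pt (pt (fun x t => -t ^ 4 / 3 + c₁ * t - 2 * t * x + c₂)) x t = -4 * t ^ 2 := by
  intro x t
  have : (fun s => pt (fun x t => -t ^ 4 / 3 + c₁ * t - 2 * t * x + c₂) x s)
      = fun s : ℝ => -4 * s ^ 3 / 3 + c₁ - 2 * x := funext fun s => hpt c₁ c₂ x s
  rw [pt, this]
  have h1 : HasDerivAt (fun s : ℝ => s ^ 3) (3 * t ^ 2) t := by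
    simpa using (hasDerivAt_pow 3 t)
  have := (((h1.const_mul (-4 : ℝ)).div_const 3).add_const c₁).sub_const (2 * x)
  exact (this.congr_deriv (show _ = -4 * t ^ 2 by ring)).deriv

end aux

theorem boussinesq_partial_symmetry_family (c₁ c₂ : ℝ) :
    ∀ x t : ℝ,
      (let u : ℝ → ℝ → ℝ := fun x t => -t ^ 4 / 3 + c₁ * t - 2 * t * x + c₂
       (pt (pt u) x t + px (px (px (px u))) x t + u x t * px (px u) x t
          + (px u x t) ^ 2 = 0) ∧
       (-10 * t - 3 * px u x t - 2 * t * pt (px u) x t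
          - (5 / 3) * t ^ 3 * px (px u) x t - x * px (px u) x t = 0) ∧
       (2 + pt (px u) x t + t ^ 2 * px (px u) x t = 0)) := by
  intro x t
  refine ⟨?_, ?_, ?_⟩ <;>
    simp only [hpx c₁ c₂, hpxx c₁ c₂, hpxt c₁ c₂, hpxxxx c₁ c₂, hptt c₁ c₂] <;> ring
end
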